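/- Let m_1 < m_2 < ... < m_K be pairwise coprime positive integers with m_1 ≥ 3 and K > 2, let M be a positive integer, and let d = min over subsets I of {1,...,K} of (∏_{i∈I} m_i + ∏_{i∉I} m_i). If A = {N'_1, N'_2} and B = {N_1, N_2} are distinct 2-element subsets of the nonnegative integers with the same residue sets modulo M·m_k for every k = 1,...,K, then max(A ∪ B) ≥ M·d. -/
import Mathlib

private lemma aux_prod_dvd {K M : ℕ} (hM : 0 < M) (m : Fin K → ℕ)
    (hcop : ∀ i j : Fin K, i ≠ j → Nat.Coprime (m i) (m j))
    (s : Finset (Fin K)) (hs : s.Nonempty) (z : ℤ)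
    (h : ∀ k ∈ s, ((M * m k : ℕ) : ℤ) ∣ z) :
    ((M * ∏ k ∈ s, m k : ℕ) : ℤ) ∣ z := by
  obtain ⟨k0, hk0⟩ := hs
  have hMz : (M : ℤ) ∣ z := dvd_trans ⟨(m k0 : ℤ), by push_cast; ring⟩ (h k0 hk0)
  obtain ⟨z', rfl⟩ := hMz
  have hM' : (M : ℤ) ≠ 0 := by positivity
  push_cast
  refine mul_dvd_mul_left _ ?_
  refine Finset.prod_dvd_of_coprime ?_ ?_
  · intro i hi j hj hij
    exact Nat.isCoprime_iff_coprime.mpr (hcop i j hij)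
  · intro k hk
    have hk' := h k hk
    push_cast at hk'
    exact (mul_dvd_mul_iff_left hM').mp hk'

/-- lower bound direction of the largest dynamic range theorem. -/
theorem stmt_1 (K M d : ℕ) (m : Fin K → ℕ)
    (hK : 2 < K) (hM : 0 < M)
    (hmono : StrictMono m) (hm1 : 3 ≤ m ⟨0, by omega⟩)
    (hcop : ∀ i j, i ≠ j → Nat.Coprime (m i) (m j))
    (hd : IsLeast {x : ℕ | ∃ I : Finset (Fin K),
      x = (∏ i ∈ I, m i) + ∏ i ∈ Iᶜ, m i} d)
    (N1 N2 N1' N2' : ℕ)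
    (hA : N1' ≠ N2') (hB : N1 ≠ N2)
    (hAB : ({N1', N2'} : Finset ℕ) ≠ ({N1, N2} : Finset ℕ))
    (hres : ∀ k : Fin K,
      ({N1', N2'} : Finset ℕ).image (· % (M * m k)) =
      ({N1, N2} : Finset ℕ).image (· % (M * m k))) :
    M * d ≤ max (max N1' N2') (max N1 N2) := by
  classical
  set X := max (max N1' N2') (max N1 N2) with hX
  have hXN1' : N1' ≤ X := le_trans (le_max_left _ _) (le_max_left _ _)
  have hXN2' : N2' ≤ X := le_trans (le_max_right _ _) (le_max_left _ _)
  have hXN1 : N1 ≤ X := le_trans (le_max_left _ _) (le_max_right _ _)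
  have hXN2 : N2 ≤ X := le_trans (le_max_right _ _) (le_max_right _ _)
  -- indices
  have hK0 : (0 : ℕ) < K := by omega
  have hK1 : (1 : ℕ) < K := by omega
  have hK2 : (2 : ℕ) < K := by omega
  set k0 : Fin K := ⟨0, hK0⟩ with hk0def
  set k1 : Fin K := ⟨1, hK1⟩ with hk1def
  set k2 : Fin K := ⟨2, hK2⟩ with hk2def
  have hm0 : 3 ≤ m k0 := hm1
  have hmpos : ∀ i, 1 ≤ m i := by
    intro i
    have : m k0 ≤ m i := hmono.monotone (by simp [hk0def, Fin.le_def])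
    omega
  -- 2*d ≤ total product
  set T : ℕ := ∏ i : Fin K, m i with hT
  have hTsplit : m k0 * ∏ i ∈ ({k0}ᶜ : Finset (Fin K)), m i = T := by
    rw [← Finset.prod_singleton (f := m) (a := k0)]
    exact Finset.prod_mul_prod_compl _ _
  have hdm0 : d ≤ m k0 + ∏ i ∈ ({k0}ᶜ : Finset (Fin K)), m i := by
    refine hd.2 ⟨{k0}, ?_⟩
    rw [Finset.prod_singleton]
  have hRge : (m k0 + 1) * (m k0 + 2) ≤ ∏ i ∈ ({k0}ᶜ : Finset (Fin K)), m i := by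
    have hk10 : m k0 + 1 ≤ m k1 := hmono (by simp [hk0def, hk1def, Fin.lt_def])
    have hk21 : m k1 + 1 ≤ m k2 := hmono (by simp [hk1def, hk2def, Fin.lt_def])
    have hk12 : k1 ≠ k2 := by simp [hk1def, hk2def, Fin.ext_iff]
    have hsub : ({k1, k2} : Finset (Fin K)) ⊆ {k0}ᶜ := by
      intro x hx
      simp only [Finset.mem_insert, Finset.mem_singleton] at hx
      simp only [Finset.mem_compl, Finset.mem_singleton]
      rcases hx with rfl | rfl <;> simp [hk0def, hk1def, hk2def, Fin.ext_iff]
    calc (m k0 + 1) * (m k0 + 2) ≤ m k1 * m k2 :=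
          Nat.mul_le_mul hk10 (by omega)
      _ = ∏ i ∈ ({k1, k2} : Finset (Fin K)), m i := (Finset.prod_pair hk12).symm
      _ ≤ ∏ i ∈ ({k0}ᶜ : Finset (Fin K)), m i :=
          Finset.prod_le_prod_of_subset_of_one_le' hsub (fun i _ _ => hmpos i)
  have h2d : 2 * d ≤ T := by nlinarith [hdm0, hRge, hm0, hTsplit]
  -- the index set where the residues pair up directly
  have pairing : ∀ k : Fin K,
      (N1' % (M * m k) = N1 % (M * m k) ∧ N2' % (M * m k) = N2 % (M * m k)) ∨
      (N1' % (M * m k) = N2 % (M * m k) ∧ N2' % (M * m k) = N1 % (M * m k)) := by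
    intro k
    have h := hres k
    simp only [Finset.image_insert, Finset.image_singleton] at h
    have e1 : N1' % (M * m k) = N1 % (M * m k) ∨ N1' % (M * m k) = N2 % (M * m k) := by
      have : N1' % (M * m k) ∈ ({N1 % (M * m k), N2 % (M * m k)} : Finset ℕ) := by
        rw [← h]; simp
      simpa using this
    have e2 : N2' % (M * m k) = N1 % (M * m k) ∨ N2' % (M * m k) = N2 % (M * m k) := by
      have : N2' % (M * m k) ∈ ({N1 % (M * m k), N2 % (M * m k)} : Finset ℕ) := by
        rw [← h]; simp
      simpa using this
    have f1 : N1 % (M * m k) = N1' % (M * m k) ∨ N1 % (M * m k) = N2' % (M * m k) := by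
      have : N1 % (M * m k) ∈ ({N1' % (M * m k), N2' % (M * m k)} : Finset ℕ) := by
        rw [h]; simp
      simpa using this
    have f2 : N2 % (M * m k) = N1' % (M * m k) ∨ N2 % (M * m k) = N2' % (M * m k) := by
      have : N2 % (M * m k) ∈ ({N1' % (M * m k), N2' % (M * m k)} : Finset ℕ) := by
        rw [h]; simp
      simpa using this
    generalize N1' % (M * m k) = x1 at *
    generalize N2' % (M * m k) = x2 at *
    generalize N1 % (M * m k) = y1 at *
    generalize N2 % (M * m k) = y2 at *
    omega
  set I : Finset (Fin K) := Finset.univ.filter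
    (fun k => N1' % (M * m k) = N1 % (M * m k) ∧ N2' % (M * m k) = N2 % (M * m k)) with hI
  set a : ℤ := (N1' : ℤ) - N1 with ha
  set b : ℤ := (N2' : ℤ) - N2 with hbdef
  set c : ℤ := (N1' : ℤ) - N2 with hc
  set e : ℤ := (N2' : ℤ) - N1 with he
  have hIn : ∀ k ∈ I, ((M * m k : ℕ) : ℤ) ∣ a ∧ ((M * m k : ℕ) : ℤ) ∣ b := by
    intro k hk
    rw [hI, Finset.mem_filter] at hk
    exact ⟨(Nat.modEq_iff_dvd.mp hk.2.1.symm), (Nat.modEq_iff_dvd.mp hk.2.2.symm)⟩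
  have hOut : ∀ k ∉ I, ((M * m k : ℕ) : ℤ) ∣ c ∧ ((M * m k : ℕ) : ℤ) ∣ e := by
    intro k hk
    rw [hI, Finset.mem_filter] at hk
    have : ¬ (N1' % (M * m k) = N1 % (M * m k) ∧ N2' % (M * m k) = N2 % (M * m k)) := by
      intro hcontra; exact hk ⟨Finset.mem_univ _, hcontra⟩
    rcases pairing k with h' | h'
    · exact absurd h' this
    · exact ⟨(Nat.modEq_iff_dvd.mp h'.1.symm), (Nat.modEq_iff_dvd.mp h'.2.symm)⟩
  have hce : a + b = c + e := by rw [ha, hbdef, hc, he]; ring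
  by_cases hsum : a + b = 0
  · -- equal sums case
    have ha0 : a ≠ 0 := by
      intro h0
      have hb0 : b = 0 := by omega
      apply hAB
      have h1 : N1' = N1 := by rw [ha] at h0; omega
      have h2 : N2' = N2 := by rw [hbdef] at hb0; omega
      rw [h1, h2]
    have hc0 : c ≠ 0 := by
      intro h0
      have he0 : e = 0 := by omega
      apply hAB
      have h1 : N1' = N2 := by rw [hc] at h0; omega
      have h2 : N2' = N1 := by rw [he] at he0; omega
      rw [h1, h2, Finset.pair_comm]
    rcases Finset.eq_empty_or_nonempty I with hIe | hIne
    · -- I empty: all k swapped, M*T divides c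
      have hIc : (Iᶜ : Finset (Fin K)) = Finset.univ := by rw [hIe]; simp
      have hdvd : ((M * T : ℕ) : ℤ) ∣ c := by
        refine aux_prod_dvd hM m hcop Finset.univ ⟨k0, Finset.mem_univ _⟩ c ?_
        intro k _
        exact (hOut k (by rw [hIe]; exact Finset.notMem_empty _)).1
      have hub' : ((M * T : ℕ) : ℤ) ≤ |c| := Int.le_of_dvd (abs_pos.mpr hc0) ((dvd_abs _ _).mpr hdvd)
      have hcase : M * T ≤ N1' ∨ M * T ≤ N2 := by
        rcases abs_cases c with ⟨habs, _⟩ | ⟨habs, _⟩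
        · left
          have h' : ((M * T : ℕ) : ℤ) ≤ (N1' : ℤ) := by
            rw [habs, hc] at hub'; linarith [Int.natCast_nonneg N2]
          exact_mod_cast h'
        · right
          have h' : ((M * T : ℕ) : ℤ) ≤ (N2 : ℤ) := by
            rw [habs, hc] at hub'; linarith [Int.natCast_nonneg N1']
          exact_mod_cast h'
      have hMd : M * d ≤ M * T := Nat.mul_le_mul_left M (by omega)
      rcases hcase with h | h <;> omega
    rcases Finset.eq_empty_or_nonempty (Iᶜ : Finset (Fin K)) with hIce | hIcne
    · -- Iᶜ empty: I = univ, M*T divides a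
      have hIu : I = Finset.univ := by
        rwa [Finset.compl_eq_empty_iff] at hIce
      have hdvd : ((M * T : ℕ) : ℤ) ∣ a := by
        refine aux_prod_dvd hM m hcop Finset.univ ⟨k0, Finset.mem_univ _⟩ a ?_
        intro k _
        exact (hIn k (by rw [hIu]; exact Finset.mem_univ _)).1
      have hub' : ((M * T : ℕ) : ℤ) ≤ |a| := Int.le_of_dvd (abs_pos.mpr ha0) ((dvd_abs _ _).mpr hdvd)
      have hcase : M * T ≤ N1' ∨ M * T ≤ N1 := by
        rcases abs_cases a with ⟨habs, _⟩ | ⟨habs, _⟩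
        · left
          have h' : ((M * T : ℕ) : ℤ) ≤ (N1' : ℤ) := by
            rw [habs, ha] at hub'; linarith [Int.natCast_nonneg N1]
          exact_mod_cast h'
        · right
          have h' : ((M * T : ℕ) : ℤ) ≤ (N1 : ℤ) := by
            rw [habs, ha] at hub'; linarith [Int.natCast_nonneg N1']
          exact_mod_cast h'
      have hMd : M * d ≤ M * T := Nat.mul_le_mul_left M (by omega)
      rcases hcase with h | h <;> omega
    · -- both nonempty
      set P : ℕ := ∏ i ∈ I, m i with hP
      set Q : ℕ := ∏ i ∈ (Iᶜ : Finset (Fin K)), m i with hQ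
      have hdPQ : d ≤ P + Q := hd.2 ⟨I, rfl⟩
      have hdvda : ((M * P : ℕ) : ℤ) ∣ a :=
        aux_prod_dvd hM m hcop I hIne a (fun k hk => (hIn k hk).1)
      have hdvdc : ((M * Q : ℕ) : ℤ) ∣ c :=
        aux_prod_dvd hM m hcop Iᶜ hIcne c (fun k hk => (hOut k (Finset.mem_compl.mp hk)).1)
      have huba : ((M * P : ℕ) : ℤ) ≤ |a| := Int.le_of_dvd (abs_pos.mpr ha0) ((dvd_abs _ _).mpr hdvda)
      have hubc : ((M * Q : ℕ) : ℤ) ≤ |c| := Int.le_of_dvd (abs_pos.mpr hc0) ((dvd_abs _ _).mpr hdvdc)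
      have hkey : M * (P + Q) ≤ N1' ∨ M * (P + Q) ≤ N2' ∨ M * (P + Q) ≤ N1 ∨ M * (P + Q) ≤ N2 := by
        have hABsum : (N1' : ℤ) + N2' = (N1 : ℤ) + N2 := by
          rw [ha, hbdef] at hsum; linarith
        have hcast : ((M * (P + Q) : ℕ) : ℤ) = ((M * P : ℕ) : ℤ) + ((M * Q : ℕ) : ℤ) := by
          push_cast; ring
        have hN1'nn : (0:ℤ) ≤ (N1' : ℤ) := Int.natCast_nonneg _
        have hN2'nn : (0:ℤ) ≤ (N2' : ℤ) := Int.natCast_nonneg _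
        have hN1nn : (0:ℤ) ≤ (N1 : ℤ) := Int.natCast_nonneg _
        have hN2nn : (0:ℤ) ≤ (N2 : ℤ) := Int.natCast_nonneg _
        rcases abs_cases a with ⟨h1, _⟩ | ⟨h1, _⟩ <;>
          rcases abs_cases c with ⟨h2, _⟩ | ⟨h2, _⟩ <;>
          rw [h1] at huba <;> rw [h2] at hubc <;> rw [ha] at huba <;> rw [hc] at hubc
        · left
          have : ((M * (P + Q) : ℕ) : ℤ) ≤ (N1' : ℤ) := by rw [hcast]; linarith
          exact_mod_cast this
        · right; right; right
          have : ((M * (P + Q) : ℕ) : ℤ) ≤ (N2 : ℤ) := by rw [hcast]; linarith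
          exact_mod_cast this
        · right; right; left
          have : ((M * (P + Q) : ℕ) : ℤ) ≤ (N1 : ℤ) := by rw [hcast]; linarith
          exact_mod_cast this
        · right; left
          have : ((M * (P + Q) : ℕ) : ℤ) ≤ (N2' : ℤ) := by rw [hcast]; linarith
          exact_mod_cast this
      have hMd : M * d ≤ M * (P + Q) := Nat.mul_le_mul_left M hdPQ
      rcases hkey with h | h | h | h <;> omega
  · -- unequal sums case
    have hdvd : ((M * T : ℕ) : ℤ) ∣ (a + b) := by
      refine aux_prod_dvd hM m hcop Finset.univ ⟨k0, Finset.mem_univ _⟩ (a + b) ?_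
      intro k _
      by_cases hk : k ∈ I
      · exact dvd_add (hIn k hk).1 (hIn k hk).2
      · rw [hce]; exact dvd_add (hOut k hk).1 (hOut k hk).2
    have hub' : ((M * T : ℕ) : ℤ) ≤ |a + b| := Int.le_of_dvd (abs_pos.mpr hsum) ((dvd_abs _ _).mpr hdvd)
    have hcase : M * T ≤ N1' + N2' ∨ M * T ≤ N1 + N2 := by
      rcases abs_cases (a + b) with ⟨habs, _⟩ | ⟨habs, _⟩
      · left
        have h' : ((M * T : ℕ) : ℤ) ≤ (N1' : ℤ) + N2' := by
          rw [habs, ha, hbdef] at hub'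
          linarith [Int.natCast_nonneg N1, Int.natCast_nonneg N2]
        exact_mod_cast h'
      · right
        have h' : ((M * T : ℕ) : ℤ) ≤ (N1 : ℤ) + N2 := by
          rw [habs, ha, hbdef] at hub'
          linarith [Int.natCast_nonneg N1', Int.natCast_nonneg N2']
        exact_mod_cast h'
    have h2 : M * (2 * d) ≤ M * T := Nat.mul_le_mul_left M h2d
    have h3 : M * (2 * d) = 2 * (M * d) := by ring
    rcases hcase with h | h <;> omega
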